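/- The canonical odometer factor map: let 𝕂 be an odometer based system with coefficients (k_n) and S ⊆ 𝕂 as below. For every s ∈ S and every n, the location r_n(s) exists and satisfies r_{n+1}(s) ≡ r_n(s) (mod K_n); consequently the map π: S → O sending s to the unique element of the odometer O whose n-th coordinate is r_n(s) mod K_n is well defined, and π(sh(s)) = π(s) + 1 for every s ∈ S, where +1 denotes the odometer transformation (addition of 1). -/

import Mathlib

/-!
Every word of `W N` is a concatenation of `W n`-words aligned at the multiples of `K n`. A point
`s ∈ S` lies inside arbitrarily long words `s↾[-a, K N - a) ∈ W N`, so it has `W n`-blocks at the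
positions `≡ -a (mod K n)` on both sides of the origin. A `W n`-word at any other offset would
straddle two consecutive aligned blocks, which unique readability forbids; hence `r n s = a % K n`.
One long word serves all stages `m ≤ n` at once, and read from `sh s` it has `a + 1` in place of
`a`: this gives `r (n + 1) s ≡ r n s (mod K n)` and `π (sh s) = π s + 1`.
-/

namespace Stmt12

/-- The shift on `A^ℤ`. -/
def sh {A : Type*} (x : ℤ → A) : ℤ → A := fun n => x (n + 1)

/-- The finite contiguous subword of `x` on `[a, a + len)`. -/
def subword {A : Type*} (x : ℤ → A) (a : ℤ) (len : ℕ) : List A :=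
  (List.range len).map fun t => x (a + t)

/-- Unique readability. -/
def UniquelyReadable {A : Type*} (W : Set (List A)) : Prop :=
  ∀ u ∈ W, ∀ v ∈ W, ∀ w ∈ W, ∀ α β : List A, u ++ v = α ++ w ++ β → α = [] ∨ β = []

/-- The symbolic system `𝕂` associated with `W`. -/
def Kset {A : Type*} (W : ℕ → Set (List A)) : Set (ℤ → A) :=
  {x | ∀ (a : ℤ) (len : ℕ), ∃ n, ∃ w ∈ W n, subword x a len <:+: w}

/-- The set `S ⊆ 𝕂` of doubly-parsed points. -/
def Sset {A : Type*} (W : ℕ → Set (List A)) : Set (ℤ → A) :=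
  {x | x ∈ Kset W ∧ ∃ a b : ℕ → ℕ,
    Filter.Tendsto a Filter.atTop Filter.atTop ∧
    Filter.Tendsto b Filter.atTop Filter.atTop ∧
    ∀ m, ∃ n, subword x (-(a m : ℤ)) (a m + b m) ∈ W n}

/-- `K_0 = 1`, `K_{n+1} = K_n k_n`: lengths of the words of `W_n`. -/
def KSeq (k : ℕ → ℕ) : ℕ → ℕ
  | 0 => 1
  | n + 1 => KSeq k n * k n

/-- `r` is a location of `s` at stage `n`: `0 ≤ r < K_n` and `s↾[−r, K_n − r) ∈ W_n`. -/
def IsLoc {A : Type*} (W : ℕ → Set (List A)) (k : ℕ → ℕ) (s : ℤ → A) (n r : ℕ) : Prop :=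
  r < KSeq k n ∧ subword s (-(r : ℤ)) (KSeq k n) ∈ W n

end Stmt12

theorem List.eq_of_flatten_ofFn_eq {α : Type*} {m : ℕ} {f g : Fin m → List α}
    (hfg : ∀ i, (f i).length = (g i).length)
    (h : (List.ofFn f).flatten = (List.ofFn g).flatten) : f = g := by
  induction m with
  | zero => exact funext fun i => i.elim0
  | succ m ih =>
    rw [List.ofFn_succ, List.ofFn_succ, List.flatten_cons, List.flatten_cons] at h
    obtain ⟨h0, hsucc⟩ := List.append_inj h (hfg 0)
    have htail := ih (fun i => hfg i.succ) hsucc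
    funext i
    cases i using Fin.cases with
    | zero => exact h0
    | succ i => exact congrFun htail i

namespace Stmt12

section Subword

variable {A : Type*}

-- In `subword`, `List.range len` is coerced to a `List ℤ`; this is the form to compute with.
theorem subword_eq_map (x : ℤ → A) (a : ℤ) (len : ℕ) :
    subword x a len = (List.range len).map fun t : ℕ => x (a + t) := by
  simp [subword, ← List.map_eq_flatMap]

theorem subword_length (x : ℤ → A) (a : ℤ) (len : ℕ) : (subword x a len).length = len := by
  simp [subword_eq_map]

theorem subword_append (x : ℤ → A) (a : ℤ) (m n : ℕ) :
    subword x a (m + n) = subword x a m ++ subword x (a + m) n := by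
  simp only [subword_eq_map, List.range_add, List.map_append, List.map_map]
  congr 1
  refine List.map_congr_left fun t _ => ?_
  simp only [Function.comp_apply, Nat.cast_add, add_assoc]

theorem subword_mul (x : ℤ → A) (a : ℤ) (m L : ℕ) :
    subword x a (m * L) = (List.ofFn fun i : Fin m => subword x (a + (i * L : ℕ)) L).flatten := by
  induction m generalizing a with
  | zero => simp [subword_eq_map]
  | succ m ih =>
    rw [Nat.succ_mul, add_comm, subword_append, ih, List.ofFn_succ, List.flatten_cons]
    simp only [Fin.val_zero, zero_mul, Nat.cast_zero, add_zero, Fin.val_succ]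
    have hpos (i : ℕ) : a + L + (i * L : ℕ) = a + ((i + 1) * L : ℕ) := by push_cast; ring
    simp only [hpos]

theorem subword_sh (x : ℤ → A) (a : ℤ) (len : ℕ) :
    subword (sh x) a len = subword x (a + 1) len := by
  simp only [subword_eq_map, sh, add_right_comm]

end Subword

section KSeq

variable {k : ℕ → ℕ}

theorem KSeq_pos (hk : ∀ n, 0 < k n) (n : ℕ) : 0 < KSeq k n := by
  induction n with
  | zero => exact Nat.one_pos
  | succ n ih => exact Nat.mul_pos ih (hk n)

theorem KSeq_monotone (hk : ∀ n, 0 < k n) : Monotone (KSeq k) :=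
  monotone_nat_of_le_succ fun n => Nat.le_mul_of_pos_right _ (hk n)

theorem KSeq_dvd {n N : ℕ} (h : n ≤ N) : KSeq k n ∣ KSeq k N := by
  induction N, h using Nat.le_induction with
  | base => exact dvd_rfl
  | succ N _ ih => exact ih.mul_right (k N)

end KSeq

section Construction

variable {A : Type*} {k : ℕ → ℕ} {W : ℕ → Set (List A)}

def WordsAreConcatenations (k : ℕ → ℕ) (W : ℕ → Set (List A)) : Prop :=
  ∀ n, ∀ w ∈ W (n + 1), ∃ f : Fin (k n) → List A, (∀ i, f i ∈ W n) ∧ w = (List.ofFn f).flatten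

theorem length_eq_KSeq_of_mem (hW0 : W 0 = {w : List A | ∃ a : A, w = [a]})
    (hW : WordsAreConcatenations k W) (n : ℕ) : ∀ w ∈ W n, w.length = KSeq k n := by
  induction n with
  | zero =>
    rw [hW0]
    rintro w ⟨a, rfl⟩
    rfl
  | succ n ih =>
    intro w hw
    obtain ⟨f, hf, rfl⟩ := hW n w hw
    simp [List.length_flatten, Function.comp_def, ih _ (hf _), KSeq, mul_comm]

theorem subword_mem_of_mem_succ (hlen : ∀ n, ∀ w ∈ W n, w.length = KSeq k n)
    (hW : WordsAreConcatenations k W) {x : ℤ → A} {p : ℤ} {n t : ℕ}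
    (hx : subword x p (KSeq k (n + 1)) ∈ W (n + 1)) (ht : t < k n) :
    subword x (p + (t * KSeq k n : ℕ)) (KSeq k n) ∈ W n := by
  obtain ⟨f, hf, hsplit⟩ := hW n _ hx
  rw [KSeq, mul_comm, subword_mul] at hsplit
  have hblocks := List.eq_of_flatten_ofFn_eq
    (fun i => by rw [subword_length, hlen n _ (hf i)]) hsplit
  exact congrFun hblocks ⟨t, ht⟩ ▸ hf ⟨t, ht⟩

theorem subword_mem_of_dvd (hlen : ∀ n, ∀ w ∈ W n, w.length = KSeq k n)
    (hW : WordsAreConcatenations k W) {x : ℤ → A} {p : ℤ} {n N i : ℕ}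
    (hx : subword x p (KSeq k N) ∈ W N) (hn : n ≤ N) (hi : KSeq k n ∣ i) (hiN : i < KSeq k N) :
    subword x (p + i) (KSeq k n) ∈ W n := by
  induction hn using Nat.decreasingInduction generalizing i with
  | self =>
    rw [Nat.eq_zero_of_dvd_of_lt hi hiN]
    simpa using hx
  | of_succ m hmN ih =>
    have hKm : 0 < KSeq k m := Nat.pos_of_dvd_of_pos (KSeq_dvd hmN.le) (by omega)
    have hKm1 : 0 < KSeq k (m + 1) := Nat.pos_of_dvd_of_pos (KSeq_dvd hmN) (by omega)
    have hmod : KSeq k m ∣ i % KSeq k (m + 1) :=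
      (Nat.dvd_mod_iff (KSeq_dvd m.le_succ)).mpr hi
    have ht : i % KSeq k (m + 1) / KSeq k m < k m :=
      (Nat.div_lt_iff_lt_mul hKm).mpr (mul_comm (KSeq k m) (k m) ▸ Nat.mod_lt _ hKm1)
    have hblock := ih (dvd_mul_left _ (i / KSeq k (m + 1)))
      ((Nat.div_mul_le_self i _).trans_lt hiN)
    have hsub := subword_mem_of_mem_succ hlen hW hblock ht
    rwa [Nat.div_mul_cancel hmod, add_assoc, ← Nat.cast_add, Nat.div_add_mod'] at hsub

end Construction

section Locations

variable {A : Type*} {k : ℕ → ℕ} {W : ℕ → Set (List A)}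

theorem offset_eq_zero_or_eq_of_uniquelyReadable {V : Set (List A)} (hV : UniquelyReadable V)
    {x : ℤ → A} {p : ℤ} {L d : ℕ} (hd : d ≤ L) (h₁ : subword x p L ∈ V)
    (h₂ : subword x (p + L) L ∈ V) (h₃ : subword x (p + d) L ∈ V) : d = 0 ∨ d = L := by
  have hsplit : subword x p L ++ subword x (p + L) L
      = subword x p d ++ subword x (p + d) L ++ subword x (p + d + L) (L - d) := by
    rw [← subword_append, ← subword_append, add_assoc, ← Nat.cast_add, ← subword_append,
      show d + L + (L - d) = L + L by omega]
  rcases hV _ h₁ _ h₂ _ h₃ _ _ hsplit with h | h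
  · exact .inl (by simpa [subword_length] using congrArg List.length h)
  · exact .inr (by
      simpa [subword_length, Nat.sub_eq_zero_iff_le, hd.ge_iff_eq] using congrArg List.length h)

theorem isLoc_iff_of_mem (hk : ∀ n, 0 < k n) (hlen : ∀ n, ∀ w ∈ W n, w.length = KSeq k n)
    (hW : WordsAreConcatenations k W) {n : ℕ} (hUR : UniquelyReadable (W n)) {s : ℤ → A}
    {a N : ℕ} (hs : subword s (-a) (KSeq k N) ∈ W N) (ha : KSeq k n ≤ a)
    (haN : a + 2 * KSeq k n ≤ KSeq k N) {r : ℕ} : IsLoc W k s n r ↔ r = a % KSeq k n := by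
  have hK := KSeq_pos hk n
  have hn : n ≤ N := ((KSeq_monotone hk).reflect_lt (by omega)).le
  have hr₀ := Nat.mod_lt a hK
  have hdvd : KSeq k n ∣ a - a % KSeq k n := Nat.dvd_sub_mod a
  have hr₀_le := Nat.mod_le a (KSeq k n)
  set K := KSeq k n
  set r₀ := a % K
  have block (i : ℕ) (p : ℤ) (hi : K ∣ i) (hiN : i < KSeq k N) (hp : p = -a + i) :
      subword s p K ∈ W n :=
    hp ▸ subword_mem_of_dvd hlen hW hs hn hi hiN
  have hcur : subword s (-r₀) K ∈ W n := block (a - r₀) _ hdvd (by omega) (by omega)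
  constructor
  · rintro ⟨hr, hsr⟩
    rcases le_or_gt r r₀ with hle | hlt
    · have hnext : subword s (-r₀ + K) K ∈ W n :=
        block (a - r₀ + K) _ (hdvd.add dvd_rfl) (by omega) (by omega)
      have := offset_eq_zero_or_eq_of_uniquelyReadable hUR (d := r₀ - r) (by omega) hcur hnext
        (by rwa [show -(r₀ : ℤ) + (r₀ - r : ℕ) = -r by omega])
      omega
    · have hK_le : K ≤ a - r₀ := Nat.le_of_dvd (by omega) hdvd
      have hprev : subword s (-r₀ - K) K ∈ W n :=
        block (a - r₀ - K) _ (Nat.dvd_sub hdvd dvd_rfl) (by omega) (by omega)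
      have := offset_eq_zero_or_eq_of_uniquelyReadable hUR (d := K + r₀ - r) (by omega) hprev
        (by rwa [sub_add_cancel])
        (by rwa [show -(r₀ : ℤ) - K + (K + r₀ - r : ℕ) = -r by omega])
      omega
  · rintro rfl
    exact ⟨hr₀, hcur⟩

end Locations

section Factor

variable {A : Type*} {k : ℕ → ℕ} {W : ℕ → Set (List A)}

theorem exists_subword_mem_of_mem_Sset (hlen : ∀ n, ∀ w ∈ W n, w.length = KSeq k n)
    {s : ℤ → A} (hs : s ∈ Sset W) (c : ℕ) :
    ∃ a N : ℕ, c ≤ a ∧ a + c ≤ KSeq k N ∧ subword s (-a) (KSeq k N) ∈ W N := by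
  obtain ⟨-, a, b, ha, hb, hab⟩ := hs
  obtain ⟨m, ham, hbm⟩ := ((ha.eventually_ge_atTop c).and (hb.eventually_ge_atTop c)).exists
  obtain ⟨N, hN⟩ := hab m
  have hlenN : a m + b m = KSeq k N := by rw [← hlen N _ hN, subword_length]
  exact ⟨a m, N, ham, by omega, hlenN ▸ hN⟩

theorem exists_isLoc_iff_mod (hk : ∀ n, 0 < k n) (hlen : ∀ n, ∀ w ∈ W n, w.length = KSeq k n)
    (hW : WordsAreConcatenations k W) (hUR : ∀ n, UniquelyReadable (W n)) {s : ℤ → A}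
    (hs : s ∈ Sset W) (n : ℕ) :
    ∃ a : ℕ, ∀ m ≤ n, ∀ r, (IsLoc W k s m r ↔ r = a % KSeq k m) ∧
      (IsLoc W k (sh s) m r ↔ r = (a + 1) % KSeq k m) := by
  obtain ⟨a, N, ha, haN, hw⟩ := exists_subword_mem_of_mem_Sset hlen hs (2 * KSeq k n + 1)
  refine ⟨a, fun m hm r => ?_⟩
  have hKm : KSeq k m ≤ KSeq k n := KSeq_monotone hk hm
  constructor
  · exact isLoc_iff_of_mem hk hlen hW (hUR m) hw (by omega) (by omega)
  · refine isLoc_iff_of_mem hk hlen hW (hUR m) (a := a + 1) (N := N) ?_ (by omega) (by omega)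
    rwa [subword_sh, Nat.cast_succ, neg_add, neg_add_cancel_right]

noncomputable def location (W : ℕ → Set (List A)) (k : ℕ → ℕ) (s : ℤ → A) (n : ℕ) : ℕ :=
  Classical.epsilon (IsLoc W k s n)

theorem isLoc_location {s : ℤ → A} {n : ℕ} (h : ∃ r, IsLoc W k s n r) :
    IsLoc W k s n (location W k s n) :=
  Classical.epsilon_spec h

end Factor

theorem canonical_odometer_factor_general
    {A : Type*}
    (kseq : ℕ → ℕ) (hk : ∀ n, 2 ≤ kseq n)
    (W : ℕ → Set (List A))
    (hW0 : W 0 = {w : List A | ∃ a : A, w = [a]})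
    (hWsucc : ∀ n, ∀ w ∈ W (n + 1), ∃ f : Fin (kseq n) → List A,
      (∀ i, f i ∈ W n) ∧ w = (List.ofFn f).flatten)
    (hUR : ∀ n, UniquelyReadable (W n)) :
    (∀ s ∈ Sset W, ∀ n, ∃ r, IsLoc W kseq s n r) ∧
    (∀ s ∈ Sset W, ∀ n, ∀ r r', IsLoc W kseq s n r → IsLoc W kseq s n r' → r = r') ∧
    (∀ s ∈ Sset W, ∀ n, ∀ r r', IsLoc W kseq s n r → IsLoc W kseq s (n + 1) r' →
      r' % KSeq kseq n = r) ∧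
    (∃ π : (ℤ → A) → ∀ n, ZMod (KSeq kseq n),
      (∀ s ∈ Sset W, ∀ n, ∀ r, IsLoc W kseq s n r → π s n = (r : ZMod (KSeq kseq n))) ∧
      (∀ s ∈ Sset W, ∀ n, (((π s (n + 1)).val : ℕ) : ZMod (KSeq kseq n)) = π s n) ∧
      (∀ s ∈ Sset W, ∀ n, π (sh s) n = π s n + 1)) := by
  have key {s : ℤ → A} (hs : s ∈ Sset W) :=
    exists_isLoc_iff_mod (fun n => Nat.zero_lt_of_lt (hk n)) (length_eq_KSeq_of_mem hW0 hWsucc)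
      hWsucc hUR hs
  have hex : ∀ s ∈ Sset W, ∀ n, ∃ r, IsLoc W kseq s n r := fun s hs n =>
    let ⟨a, ha⟩ := key hs n
    ⟨_, ((ha n le_rfl _).1).2 rfl⟩
  have huniq : ∀ s ∈ Sset W, ∀ n, ∀ r r', IsLoc W kseq s n r → IsLoc W kseq s n r' → r = r' := by
    intro s hs n r r' hr hr'
    obtain ⟨a, ha⟩ := key hs n
    rw [(ha n le_rfl r).1.1 hr, (ha n le_rfl r').1.1 hr']
  have hcoh : ∀ s ∈ Sset W, ∀ n, ∀ r r', IsLoc W kseq s n r → IsLoc W kseq s (n + 1) r' →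
      r' % KSeq kseq n = r := by
    intro s hs n r r' hr hr'
    obtain ⟨a, ha⟩ := key hs (n + 1)
    rw [(ha n n.le_succ r).1.1 hr, (ha _ le_rfl r').1.1 hr',
      Nat.mod_mod_of_dvd _ (KSeq_dvd n.le_succ)]
  have hloc {s} (hs : s ∈ Sset W) n := isLoc_location (hex s hs n)
  refine ⟨hex, huniq, hcoh, fun s n => location W kseq s n,
    fun s hs n r hr => congrArg Nat.cast (huniq s hs n _ _ (hloc hs n) hr),
    fun s hs n => ?_, fun s hs n => ?_⟩ <;> dsimp only
  · rw [ZMod.val_natCast, Nat.mod_eq_of_lt (hloc hs (n + 1)).1,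
      ← hcoh s hs n _ _ (hloc hs n) (hloc hs (n + 1)), ZMod.natCast_mod]
  · obtain ⟨a, ha⟩ := key hs n
    have hsh := (ha n le_rfl _).2.1 (isLoc_location ⟨_, (ha n le_rfl _).2.2 rfl⟩)
    simp only [hsh, (ha n le_rfl _).1.1 (hloc hs n), ZMod.natCast_mod, Nat.cast_succ]

/-- The canonical odometer factor: for an odometer based system `𝕂` with coefficients `k_n`,
for every `s ∈ S` and `n` the location `r_n(s)` exists (and is unique), and
`r_{n+1}(s) ≡ r_n(s) (mod K_n)`; consequently the map `π : S → O` into the odometer `O`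
(the inverse limit of the `ℤ/K_nℤ`, realized as coherent sequences in `∀ n, ZMod (K_n)`)
sending `s` to the sequence `(r_n(s) mod K_n)_n` is well defined, and `π(sh s) = π(s) + 1`. -/
theorem canonical_odometer_factor
    {A : Type*} [Fintype A]
    (kseq : ℕ → ℕ) (hk : ∀ n, 2 ≤ kseq n)
    (W : ℕ → Set (List A))
    (hW0 : W 0 = {w : List A | ∃ a : A, w = [a]})
    (hWsucc : ∀ n, ∀ w ∈ W (n + 1), ∃ f : Fin (kseq n) → List A,
      (∀ i, f i ∈ W n) ∧ w = (List.ofFn f).flatten)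
    (hUR : ∀ n, UniquelyReadable (W n)) :
    (∀ s ∈ Sset W, ∀ n, ∃ r, IsLoc W kseq s n r) ∧
    (∀ s ∈ Sset W, ∀ n, ∀ r r', IsLoc W kseq s n r → IsLoc W kseq s n r' → r = r') ∧
    (∀ s ∈ Sset W, ∀ n, ∀ r r', IsLoc W kseq s n r → IsLoc W kseq s (n + 1) r' →
      r' % KSeq kseq n = r) ∧
    (∃ π : (ℤ → A) → ∀ n, ZMod (KSeq kseq n),
      (∀ s ∈ Sset W, ∀ n, ∀ r, IsLoc W kseq s n r → π s n = (r : ZMod (KSeq kseq n))) ∧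
      (∀ s ∈ Sset W, ∀ n, (((π s (n + 1)).val : ℕ) : ZMod (KSeq kseq n)) = π s n) ∧
      (∀ s ∈ Sset W, ∀ n, π (sh s) n = π s n + 1)) :=
  canonical_odometer_factor_general kseq hk W hW0 hWsucc hUR

end Stmt12
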